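/- Let p ∈ ℤ, let q ≥ 1 be an integer, and let V : ℝ → ℂ be a 2π-periodic integrable function whose Fourier coefficients satisfy V̂(m) = 0 for every m ∈ ℤ not divisible by q. Then for all k, ℓ ∈ ℤ one has V̂(k−ℓ)·(e^{2πi(p/q)k²} − e^{2πi(p/q)ℓ²}) = 0; that is, all matrix entries of the commutator [e^{2πi(p/q)Δ}, V] in the Fourier basis vanish. -/

import Mathlib

open Complex

open scoped Real

/-- The `k`-th Fourier coefficient of a `2π`-periodic function:
`û(k) = (1/2π) ∫₀^{2π} u(x) e^{−ikx} dx`. -/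
noncomputable def fourierCoef (u : ℝ → ℂ) (k : ℤ) : ℂ :=
  (1 / (2 * (Real.pi : ℂ))) *
    ∫ x in (0:ℝ)..(2 * Real.pi), u x * Complex.exp (-(Complex.I * (k : ℂ) * (x : ℂ)))

theorem exp_two_pi_I_div_mul_sq_eq_of_dvd_sub (p : ℤ) {q k l : ℤ} (h : q ∣ k - l) :
    exp (2 * π * I * ((p : ℂ) / q) * (k : ℂ) ^ 2) =
      exp (2 * π * I * ((p : ℂ) / q) * (l : ℂ) ^ 2) := by
  obtain ⟨t, ht⟩ := h
  rcases eq_or_ne q 0 with rfl | hq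
  · rw [zero_mul, sub_eq_zero] at ht
    rw [ht]
  have hq' : (q : ℂ) ≠ 0 := Int.cast_ne_zero.mpr hq
  have hkl : (k : ℂ) = l + q * t := by
    rw [← sub_eq_iff_eq_add']
    exact_mod_cast ht
  -- `k² − l² = q t (2l + q t)`, so the exponents differ by an integer multiple of `2πi`.
  refine exp_eq_exp_iff_exists_int.mpr ⟨p * t * (2 * l + q * t), ?_⟩
  rw [hkl]
  push_cast
  field_simp
  ring

theorem stmt1_general (p : ℤ) (q : ℕ) (V : ℝ → ℂ)
    (hVq : ∀ m : ℤ, ¬ ((q : ℤ) ∣ m) → fourierCoef V m = 0) :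
    ∀ k l : ℤ,
      fourierCoef V (k - l) *
        (Complex.exp (2 * (Real.pi : ℂ) * Complex.I * ((p : ℂ) / (q : ℂ)) * (k : ℂ) ^ 2) -
         Complex.exp (2 * (Real.pi : ℂ) * Complex.I * ((p : ℂ) / (q : ℂ)) * (l : ℂ) ^ 2)) = 0 := by
  intro k l
  by_cases h : (q : ℤ) ∣ k - l
  · have hexp := exp_two_pi_I_div_mul_sq_eq_of_dvd_sub p h
    rw [Int.cast_natCast (R := ℂ)] at hexp
    rw [hexp, sub_self, mul_zero]
  · rw [hVq _ h, zero_mul]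

/-- If `V` is `2π`-periodic, integrable, with `V̂(m) = 0` whenever `q ∤ m`,
then for all `k, ℓ ∈ ℤ`, `V̂(k−ℓ)·(e^{2πi(p/q)k²} − e^{2πi(p/q)ℓ²}) = 0`, i.e. all matrix
entries of the commutator `[e^{2πi(p/q)Δ}, V]` in the Fourier basis vanish. -/
theorem stmt1 (p : ℤ) (q : ℕ) (hq : 1 ≤ q) (V : ℝ → ℂ)
    (hV_per : ∀ x, V (x + 2 * Real.pi) = V x)
    (hV_int : IntervalIntegrable V MeasureTheory.volume 0 (2 * Real.pi))
    (hVq : ∀ m : ℤ, ¬ ((q : ℤ) ∣ m) → fourierCoef V m = 0) :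
    ∀ k l : ℤ,
      fourierCoef V (k - l) *
        (Complex.exp (2 * (Real.pi : ℂ) * Complex.I * ((p : ℂ) / (q : ℂ)) * (k : ℂ) ^ 2) -
         Complex.exp (2 * (Real.pi : ℂ) * Complex.I * ((p : ℂ) / (q : ℂ)) * (l : ℂ) ^ 2)) = 0 :=
  stmt1_general p q V hVq
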